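/- For every real number s that is not an integer multiple of π, the sum over all integers n of |sin(s)/(s - nπ)|² equals 1. (Partial fraction expansion identity: ∑_{n∈ℤ} 1/(s - nπ)² = 1/sin²(s).) -/

import Mathlib

/-!
Differentiate the Mittag-Leffler expansion
`π cot (π x) = 1 / x + ∑ₙ (1 / (x - n) + 1 / (x + n))` (`cot_series_rep'`) term by term.
On an interval `(p, q)` containing no integer, each derivative `1 / (y - m) ^ 2` is bounded by
its values at the two endpoints, a summable bound independent of `y`, so the differentiated
series converges to the derivative. This gives
`∑_{n ∈ ℤ} 1 / (x - n) ^ 2 = π ^ 2 / sin (π x) ^ 2`, and the theorem is the case `x = s / π`.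
-/

open Real

namespace Real

theorem hasSum_cot_series {x : ℝ} (hx : ∀ n : ℤ, x ≠ n) :
    HasSum (fun n : ℕ => 1 / (x - (n + 1)) + 1 / (x + (n + 1))) (π * cot (π * x) - 1 / x) := by
  have hxC : (x : ℂ) ∈ Complex.integerComplement := by
    rintro ⟨n, hn⟩
    exact hx n (by exact_mod_cast hn.symm)
  rw [← Complex.hasSum_ofReal]
  push_cast [Complex.ofReal_cot]
  rw [cot_series_rep' hxC]
  exact (summable_cotTerm hxC).hasSum

theorem hasDerivAt_cot {x : ℝ} (hx : sin x ≠ 0) : HasDerivAt cot (-1 / sin x ^ 2) x := by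
  have h := (hasDerivAt_cos x).div (hasDerivAt_sin x) hx
  rw [show cos / sin = cot from funext fun y => (cot_eq_cos_div_sin y).symm] at h
  refine h.congr_deriv ?_
  rw [← sin_sq_add_cos_sq x]
  ring

theorem hasDerivAt_one_div_sub_add_one_div_add {c x : ℝ} (h₁ : x - c ≠ 0)
    (h₂ : x + c ≠ 0) :
    HasDerivAt (fun y => 1 / (y - c) + 1 / (y + c))
      (-(1 / (x - c) ^ 2 + 1 / (x + c) ^ 2)) x := by
  have := (((hasDerivAt_id' x).sub_const c).fun_inv h₁).fun_add
    (((hasDerivAt_id' x).add_const c).fun_inv h₂)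
  simpa only [one_div, neg_div, neg_add] using this

theorem summable_one_div_natCast_add_sq (a : ℝ) : Summable fun n : ℕ => 1 / (n + a) ^ 2 := by
  simpa only [rpow_two, sq_abs] using (summable_one_div_nat_add_rpow a 2).mpr one_lt_two

theorem summable_one_div_sub_natCast_add_one_sq (a : ℝ) :
    Summable fun n : ℕ => 1 / (a - (n + 1)) ^ 2 :=
  (summable_one_div_natCast_add_sq (1 - a)).congr fun n => by ring_nf

theorem summable_one_div_add_natCast_add_one_sq (a : ℝ) :
    Summable fun n : ℕ => 1 / (a + (n + 1)) ^ 2 :=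
  (summable_one_div_natCast_add_sq (1 + a)).congr fun n => by ring_nf

theorem one_div_sq_le_of_mem_Icc {a b y : ℝ} (h₀ : (0 : ℝ) ∉ Set.Icc a b)
    (hy : y ∈ Set.Icc a b) :
    1 / y ^ 2 ≤ 1 / a ^ 2 + 1 / b ^ 2 := by
  rcases lt_or_gt_of_ne (show y ≠ 0 by rintro rfl; exact h₀ hy) with hneg | hpos
  · have hb : b < 0 := not_le.mp fun hb => h₀ ⟨by linarith [hy.1], hb⟩
    have : 1 / y ^ 2 ≤ 1 / b ^ 2 :=
      one_div_le_one_div_of_le (by nlinarith) (by nlinarith [hy.2])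
    linarith [show 0 ≤ 1 / a ^ 2 by positivity]
  · have ha : 0 < a := not_le.mp fun ha => h₀ ⟨ha, by linarith [hy.2]⟩
    have : 1 / y ^ 2 ≤ 1 / a ^ 2 :=
      one_div_le_one_div_of_le (by positivity) (by nlinarith [hy.1])
    linarith [show 0 ≤ 1 / b ^ 2 by positivity]

theorem hasDerivAt_tsum_cot_series {p q x : ℝ} (hpq : ∀ m : ℤ, (m : ℝ) ∉ Set.Icc p q)
    (hx : x ∈ Set.Ioo p q) :
    HasDerivAt (fun y : ℝ => ∑' n : ℕ, (1 / (y - (n + 1)) + 1 / (y + (n + 1))))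
      (∑' n : ℕ, -(1 / (x - (n + 1)) ^ 2 + 1 / (x + (n + 1)) ^ 2)) x := by
  have hshift : ∀ m : ℤ, (0 : ℝ) ∉ Set.Icc (p - m) (q - m) := fun m h =>
    hpq m ⟨by linarith [h.1], by linarith [h.2]⟩
  have hne : ∀ m : ℤ, ∀ y ∈ Set.Ioo p q, y - m ≠ 0 := fun m y hy h =>
    hshift m ⟨by linarith [hy.1], by linarith [hy.2]⟩
  have hbound : ∀ m : ℤ, ∀ y ∈ Set.Ioo p q,
      1 / (y - m) ^ 2 ≤ 1 / (p - m) ^ 2 + 1 / (q - m) ^ 2 :=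
    fun m y hy => one_div_sq_le_of_mem_Icc (hshift m) ⟨by linarith [hy.1], by linarith [hy.2]⟩
  refine hasDerivAt_tsum_of_isPreconnected
    (g' := fun (n : ℕ) (y : ℝ) => -(1 / (y - (n + 1)) ^ 2 + 1 / (y + (n + 1)) ^ 2))
    (((summable_one_div_sub_natCast_add_one_sq p).add
        (summable_one_div_add_natCast_add_one_sq p)).add
      ((summable_one_div_sub_natCast_add_one_sq q).add
        (summable_one_div_add_natCast_add_one_sq q)))
    isOpen_Ioo isPreconnected_Ioo ?_ ?_ hx (hasSum_cot_series ?_).summable hx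
  · intro n y hy
    refine hasDerivAt_one_div_sub_add_one_div_add (by exact_mod_cast hne (n + 1) y hy) ?_
    simpa only [Int.cast_neg, Int.cast_add, Int.cast_natCast, Int.cast_one, sub_neg_eq_add]
      using hne (-(n + 1)) y hy
  · intro n y hy
    have h₁ : 1 / (y - (n + 1)) ^ 2 ≤ 1 / (p - (n + 1)) ^ 2 + 1 / (q - (n + 1)) ^ 2 := by
      exact_mod_cast hbound (n + 1) y hy
    have h₂ : 1 / (y + (n + 1)) ^ 2 ≤ 1 / (p + (n + 1)) ^ 2 + 1 / (q + (n + 1)) ^ 2 := by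
      simpa only [Int.cast_neg, Int.cast_add, Int.cast_natCast, Int.cast_one, sub_neg_eq_add]
        using hbound (-(n + 1)) y hy
    rw [norm_neg, Real.norm_of_nonneg (by positivity)]
    linarith
  · intro n
    exact sub_ne_zero.mp (hne n x hx)

theorem hasSum_one_div_sub_intCast_sq {x : ℝ} (hx : ∀ n : ℤ, x ≠ n) :
    HasSum (fun n : ℤ => 1 / (x - n) ^ 2) (π ^ 2 / sin (π * x) ^ 2) := by
  have hx₀ : x ≠ 0 := by exact_mod_cast hx 0
  have hsin : sin (π * x) ≠ 0 := fun h => by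
    obtain ⟨n, hn⟩ := sin_eq_zero_iff.mp h
    exact hx n (mul_left_cancel₀ pi_ne_zero (by linarith)).symm
  have hcot : HasDerivAt (fun y => π * cot (π * y) - 1 / y)
      (π * (-1 / sin (π * x) ^ 2 * π) - -(1 / x ^ 2)) x := by
    have := (((hasDerivAt_cot hsin).comp x ((hasDerivAt_id' x).const_mul π)).const_mul π).fun_sub
      (hasDerivAt_inv hx₀)
    simpa only [one_div, mul_one, Function.comp_apply] using this
  have hnear : (fun y => ∑' n : ℕ, (1 / (y - (n + 1)) + 1 / (y + (n + 1))))
      =ᶠ[nhds x] fun y => π * cot (π * y) - 1 / y := by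
    filter_upwards [isOpen_compl_range_intCast.mem_nhds (x := x) fun ⟨n, hn⟩ => hx n hn.symm]
      with y hy
    exact (hasSum_cot_series fun n hn => hy ⟨n, hn.symm⟩).tsum_eq
  obtain ⟨p, hp, hpx⟩ := exists_between ((Int.floor_le x).lt_of_ne (hx ⌊x⌋).symm)
  obtain ⟨q, hxq, hq⟩ := exists_between (Int.lt_floor_add_one x)
  have hpq : ∀ m : ℤ, (m : ℝ) ∉ Set.Icc p q := fun m hm => by
    have h₁ : ⌊x⌋ < m := by exact_mod_cast hp.trans_le hm.1
    have h₂ : m < ⌊x⌋ + 1 := by exact_mod_cast hm.2.trans_lt hq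
    omega
  have hseries := (hasDerivAt_tsum_cot_series hpq ⟨hpx, hxq⟩).unique
    (hcot.congr_of_eventuallyEq hnear)
  obtain ⟨A, hA⟩ := summable_one_div_sub_natCast_add_one_sq x
  obtain ⟨B, hB⟩ := summable_one_div_add_natCast_add_one_sq x
  rw [(hA.add hB).neg.tsum_eq] at hseries
  have := HasSum.of_add_one_of_neg_add_one (f := fun n : ℤ => 1 / (x - n) ^ 2)
    (by exact_mod_cast hA) (by push_cast [sub_neg_eq_add]; exact hB)
  convert this using 1
  rw [Int.cast_zero, sub_zero]
  linear_combination hseries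

end Real

theorem tsum_sq_sin_div_sub_int_mul_pi (s : ℝ) (hs : ∀ n : ℤ, s ≠ n * π) :
    ∑' n : ℤ, |Real.sin s / (s - n * π)| ^ 2 = 1 := by
  have hsin : sin s ≠ 0 := fun h => by
    obtain ⟨n, hn⟩ := sin_eq_zero_iff.mp h
    exact hs n hn.symm
  have hx : ∀ n : ℤ, s / π ≠ n := fun n h => hs n (by rw [← h]; field_simp)
  have hterm : ∀ n : ℤ,
      |sin s / (s - n * π)| ^ 2 = sin s ^ 2 / π ^ 2 * (1 / (s / π - n) ^ 2) := by
    intro n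
    rw [sq_abs]
    field_simp
  simp_rw [hterm]
  rw [tsum_mul_left, (hasSum_one_div_sub_intCast_sq hx).tsum_eq, mul_div_cancel₀ s pi_ne_zero]
  field_simp
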